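/- arXiv:1302.5711 — 11 statements merged into one kernel-verified Lean document; each statement's English description precedes it below -/
import Mathlib

section
/- Let G be a finite simple graph and let (σ_A, g_A, σ_B, g_B) be a correct strategy for the guessing game on G. Let a and b be adjacent vertices, and suppose σ_A(b) = n is finite and σ_B(a) ≥ n (so player A, placed at a and observing b, announces their guess at time n while B has said nothing before time n). Then for every vertex a' adjacent to b with a' ≠ a, one has σ_B(a') < n and g_B(a') = b; that is, had A been placed on any other neighbor of b, player B would have correctly announced their own vertex b no later than time n − 1. -/
/-- A (simultaneous) strategy `(σA, gA, σB, gB)` is correct on the simple graph `G`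
if for every ordered pair `(a, b)` of adjacent vertices (player A placed at `a`,
player B at `b`): at least one player eventually speaks, and whoever speaks first
(or at a tie, both) announces their own vertex correctly. -/
def CorrectStrategy {V : Type*} (G : SimpleGraph V) (σA σB : V → ℕ∞) (gA gB : V → V) : Prop :=
  ∀ a b : V, G.Adj a b →
    min (σA b) (σB a) < ⊤ ∧ (σA b ≤ σB a → gA b = a) ∧ (σB a ≤ σA b → gB a = b)

/-- If player A, placed at `a` and observing `b`, announces at finite time `n` while B has
said nothing before time `n`, then had A been placed on any other neighbor `a'` of `b`,
player B would have correctly announced their own vertex `b` no later than time `n - 1`. -/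
theorem silence_forces_earlier_guess {V : Type*} [Fintype V] (G : SimpleGraph V)
    (σA σB : V → ℕ∞) (gA gB : V → V)
    (hA : ∀ v, 1 ≤ σA v) (hB : ∀ v, 1 ≤ σB v)
    (hcorr : CorrectStrategy G σA σB gA gB)
    (a b : V) (hab : G.Adj a b) (n : ℕ)
    (hn : σA b = (n : ℕ∞)) (hsilent : (n : ℕ∞) ≤ σB a) :
    ∀ a' : V, G.Adj a' b → a' ≠ a → σB a' < (n : ℕ∞) ∧ gB a' = b := by
  intro a' hadj hne
  obtain ⟨-, hgA, -⟩ := hcorr a b hab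
  have hga : gA b = a := hgA (hn ▸ hsilent)
  obtain ⟨-, hgA', hgB'⟩ := hcorr a' b hadj
  have hlt : σB a' < (n : ℕ∞) := by
    by_contra h
    push_neg at h
    exact hne ((hga ▸ hgA' (hn ▸ h)).symm)
  exact ⟨hlt, hgB' (hn ▸ hlt.le)⟩
end

section
/- A finite connected simple graph G admits a correct strategy (one that is correct on every ordered pair of adjacent vertices, i.e., every edge of G can be guessed correctly by at least one of the players regardless of placement) if and only if G is acyclic, i.e., G is a tree. -/
open SimpleGraph

private lemma walk_support_getElem {V : Type*} {G : SimpleGraph V} :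
    ∀ {u v : V} (p : G.Walk u v) (i : ℕ) (h : i < p.support.length), p.support[i] = p.getVert i := by
  intro u v p
  induction p with
  | nil => intro i h; simp [Walk.support_nil] at h; subst h; simp
  | cons h' q ih =>
    intro i h
    cases i with
    | zero => simp
    | succ n =>
      simp only [Walk.support_cons, List.getElem_cons_succ, Walk.getVert_cons_succ]
      exact ih n (by simpa [Walk.support_cons] using h)

private lemma exists_shortest_path {V : Type*} {G : SimpleGraph V} (h : G.Connected) (u v : V) :
    ∃ p : G.Walk u v, p.IsPath ∧ p.length = G.dist u v := by
  classical
  obtain ⟨w, hw⟩ := (h.preconnected u v).exists_walk_length_eq_dist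
  exact ⟨w.bypass, w.bypass_isPath,
    le_antisymm (hw ▸ w.length_bypass_le) (SimpleGraph.dist_le _)⟩

private lemma dist_le_of_mem_support {V : Type*} {G : SimpleGraph V} {r v x : V}
    (p : G.Walk r v) (hx : x ∈ p.support) : G.dist r x ≤ p.length := by
  classical
  exact le_trans (SimpleGraph.dist_le (p.takeUntil x hx)) (Walk.length_takeUntil_le p hx)

private lemma adj_dist_le_one {V : Type*} {G : SimpleGraph V} {a b : V} (h : G.Adj a b) :
    G.dist a b ≤ 1 := by
  simpa using SimpleGraph.dist_le (Walk.cons h Walk.nil)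

/-- In a tree, the distances to the root of two adjacent vertices differ by exactly one. -/
private lemma tree_adj_dist {V : Type*} {G : SimpleGraph V} (hT : G.IsTree) (r : V) {a b : V}
    (hab : G.Adj a b) :
    G.dist r a + 1 = G.dist r b ∨ G.dist r b + 1 = G.dist r a := by
  classical
  have hconn := hT.isConnected
  have h1 : G.dist r b ≤ G.dist r a + 1 :=
    le_trans (hconn.dist_triangle (v := a)) (by have := adj_dist_le_one hab; omega)
  have h2 : G.dist r a ≤ G.dist r b + 1 :=
    le_trans (hconn.dist_triangle (v := b)) (by have := adj_dist_le_one hab.symm; omega)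
  have hne : G.dist r a ≠ G.dist r b := by
    intro heq
    obtain ⟨P, hP, hPlen⟩ := exists_shortest_path hconn r a
    obtain ⟨Q, hQ, hQlen⟩ := exists_shortest_path hconn r b
    have hbP : b ∉ P.support := by
      intro hb
      have ht : G.dist r b ≤ (P.takeUntil b hb).length :=
        SimpleGraph.dist_le _
      have hsplit : (P.takeUntil b hb).length + (P.dropUntil b hb).length = P.length := by
        rw [← Walk.length_append, P.take_spec hb]
      have hdrop : 1 ≤ (P.dropUntil b hb).length := by
        by_contra hcon
        have h0 : (P.dropUntil b hb).length = 0 := by omega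
        exact hab.ne (Walk.eq_of_length_eq_zero h0).symm
      omega
    have hW : (Walk.cons hab.symm P.reverse).IsPath := by
      rw [Walk.cons_isPath_iff]
      exact ⟨hP.reverse, by simpa [Walk.support_reverse] using hbP⟩
    obtain ⟨p₀, _, huniq⟩ := hT.existsUnique_path b r
    have heqw : Walk.cons hab.symm P.reverse = Q.reverse :=
      (huniq _ hW).trans (huniq _ hQ.reverse).symm
    have := congrArg Walk.length heqw
    simp only [Walk.length_cons, Walk.length_reverse] at this
    omega
  omega

/-- In a tree, the neighbour of `b` that is closer to the root is unique. -/
private lemma tree_parent_unique {V : Type*} {G : SimpleGraph V} (hT : G.IsTree) (r : V)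
    {a a' b : V} (hab : G.Adj a b) (ha'b : G.Adj a' b)
    (hda : G.dist r a + 1 = G.dist r b) (hda' : G.dist r a' + 1 = G.dist r b) : a = a' := by
  classical
  have hconn := hT.isConnected
  obtain ⟨P, hP, hPlen⟩ := exists_shortest_path hconn r a
  obtain ⟨P', hP', hP'len⟩ := exists_shortest_path hconn r a'
  have hbP : b ∉ P.support := fun hb => by
    have := dist_le_of_mem_support P hb; omega
  have hbP' : b ∉ P'.support := fun hb => by
    have := dist_le_of_mem_support P' hb; omega
  have hW : (Walk.cons hab.symm P.reverse).IsPath := by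
    rw [Walk.cons_isPath_iff]
    exact ⟨hP.reverse, by simpa [Walk.support_reverse] using hbP⟩
  have hW' : (Walk.cons ha'b.symm P'.reverse).IsPath := by
    rw [Walk.cons_isPath_iff]
    exact ⟨hP'.reverse, by simpa [Walk.support_reverse] using hbP'⟩
  obtain ⟨p₀, _, huniq⟩ := hT.existsUnique_path b r
  have heqw : Walk.cons hab.symm P.reverse = Walk.cons ha'b.symm P'.reverse :=
    (huniq _ hW).trans (huniq _ hW').symm
  have := congrArg (fun w => Walk.getVert w 1) heqw
  simpa [Walk.getVert_cons_succ, Walk.getVert_zero] using this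

/-- Every vertex at positive distance from the root has a neighbour strictly closer
to the root. -/
private lemma exists_parent {V : Type*} {G : SimpleGraph V} (hconn : G.Connected) (r v : V)
    (h : G.dist r v ≠ 0) : ∃ u, G.Adj v u ∧ G.dist r u + 1 = G.dist r v := by
  obtain ⟨P, hP, hPlen⟩ := exists_shortest_path hconn r v
  obtain ⟨u, hadj, q, hq⟩ : ∃ u, ∃ _ : G.Adj v u, ∃ q : G.Walk u r,
      q.length + 1 = G.dist r v := by
    cases hPr : P.reverse with
    | nil =>
      exfalso
      have := congrArg Walk.length hPr
      simp only [Walk.length_reverse, Walk.length_nil] at this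
      omega
    | cons hadj q =>
      refine ⟨_, hadj, q, ?_⟩
      have := congrArg Walk.length hPr
      simp only [Walk.length_reverse, Walk.length_cons] at this
      omega
  have h1 : G.dist r u ≤ q.length := by
    rw [SimpleGraph.dist_comm]; exact SimpleGraph.dist_le q
  have h2 : G.dist r v ≤ G.dist r u + 1 :=
    le_trans (hconn.dist_triangle (v := u)) (by have := adj_dist_le_one hadj.symm; omega)
  exact ⟨u, hadj, by omega⟩

/-- A finite connected simple graph admits a correct strategy (all finite speaking
times being at least 1) if and only if it is acyclic, i.e. a tree. -/
theorem correct_strategy_iff_tree {V : Type*} [Fintype V] (G : SimpleGraph V)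
    (hconn : G.Connected) :
    (∃ (σA σB : V → ℕ∞) (gA gB : V → V),
      (∀ v, 1 ≤ σA v) ∧ (∀ v, 1 ≤ σB v) ∧ CorrectStrategy G σA σB gA gB) ↔
    G.IsAcyclic := by
  classical
  constructor
  · rintro ⟨σA, σB, gA, gB, -, -, hcor⟩
    by_contra hcyc
    unfold SimpleGraph.IsAcyclic at hcyc
    push_neg at hcyc
    obtain ⟨v, c, hc⟩ := hcyc
    set S := c.support.toFinset with hS
    have hSne : S.Nonempty := ⟨v, by simp [hS]⟩
    obtain ⟨v0, hv0, hmin⟩ := S.exists_min_image (fun x => min (σA x) (σB x)) hSne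
    have hv0c : v0 ∈ c.support := by simpa [hS] using hv0
    set c' := c.rotate v0 hv0c with hc'def
    have hc' : c'.IsCycle := hc.rotate hv0c
    have hlen3 : 3 ≤ c'.length := hc'.three_le_length
    have hnil : ¬c'.Nil := hc'.not_nil
    set x := c'.getVert 1 with hxdef
    set y := c'.getVert (c'.length - 1) with hydef
    have hax : G.Adj v0 x := Walk.adj_snd hnil
    have hay : G.Adj v0 y := by
      have hnr : ¬c'.reverse.Nil := by
        rw [Walk.nil_iff_length_eq, Walk.length_reverse]; omega
      have h : G.Adj v0 (c'.reverse.getVert 1) := Walk.adj_snd hnr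
      rwa [Walk.getVert_reverse] at h
    have hsuplen : c'.support.length = c'.length + 1 := Walk.length_support c'
    have htail : c'.support.tail.length = c'.length := by
      rw [List.length_tail, hsuplen]; omega
    have e0 : c'.support.tail[0]'(by omega) = x := by
      rw [List.getElem_tail, walk_support_getElem]
    have e1 : c'.support.tail[c'.length - 2]'(by omega) = y := by
      rw [List.getElem_tail, walk_support_getElem]
      congr 1
      omega
    have hxy : x ≠ y := by
      intro hxyeq
      have hnd : c'.support.tail.Nodup := hc'.support_nodup
      have : (0 : ℕ) = c'.length - 2 :=
        (List.Nodup.getElem_inj_iff hnd).mp (e0.trans (hxyeq.trans e1.symm))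
      omega
    have hrot := Walk.support_rotate c v0 hv0c
    have hxS : x ∈ S := by
      rw [hS, List.mem_toFinset]
      refine List.mem_of_mem_tail ((hrot.mem_iff).mp ?_)
      rw [← e0]; exact List.getElem_mem _
    have hyS : y ∈ S := by
      rw [hS, List.mem_toFinset]
      refine List.mem_of_mem_tail ((hrot.mem_iff).mp ?_)
      rw [← e1]; exact List.getElem_mem _
    rcases le_total (σA v0) (σB v0) with hA | hB
    · -- player A observing v0 speaks weakly first
      have hx1 : σA v0 ≤ σB x := by
        have h' : min (σA v0) (σB v0) = σA v0 := min_eq_left hA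
        have := hmin x hxS
        rw [h'] at this
        exact le_trans this (min_le_right _ _)
      have hy1 : σA v0 ≤ σB y := by
        have h' : min (σA v0) (σB v0) = σA v0 := min_eq_left hA
        have := hmin y hyS
        rw [h'] at this
        exact le_trans this (min_le_right _ _)
      have h1 := (hcor x v0 hax.symm).2.1 hx1
      have h2 := (hcor y v0 hay.symm).2.1 hy1
      exact hxy (h1.symm.trans h2)
    · -- player B observing v0 speaks weakly first
      have hx1 : σB v0 ≤ σA x := by
        have h' : min (σA v0) (σB v0) = σB v0 := min_eq_right hB
        have := hmin x hxS
        rw [h'] at this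
        exact le_trans this (min_le_left _ _)
      have hy1 : σB v0 ≤ σA y := by
        have h' : min (σA v0) (σB v0) = σB v0 := min_eq_right hB
        have := hmin y hyS
        rw [h'] at this
        exact le_trans this (min_le_left _ _)
      have h1 := (hcor v0 x hax).2.2 hx1
      have h2 := (hcor v0 y hay).2.2 hy1
      exact hxy (h1.symm.trans h2)
  · intro hac
    have hT : G.IsTree := ⟨hconn, hac⟩
    have hne : Nonempty V := hconn.nonempty
    obtain ⟨r⟩ := hne
    set d : V → ℕ := fun v => G.dist r v with hd
    set N : ℕ := Finset.univ.sup d with hN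
    have hdN : ∀ v, d v ≤ N := fun v => Finset.le_sup (Finset.mem_univ v)
    set σ : V → ℕ∞ := fun v => ((N + 1 - d v : ℕ) : ℕ∞) with hσ
    set g : V → V := fun v =>
      if h : ∃ u, G.Adj v u ∧ G.dist r u + 1 = G.dist r v then h.choose else v with hg
    have hgspec : ∀ v, d v ≠ 0 → G.Adj v (g v) ∧ d (g v) + 1 = d v := by
      intro v hv
      have hex : ∃ u, G.Adj v u ∧ G.dist r u + 1 = G.dist r v :=
        exists_parent hconn r v hv
      simp only [hg, dif_pos hex]
      exact hex.choose_spec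
    refine ⟨σ, σ, g, g, ?_, ?_, ?_⟩
    · intro v
      have h1 : 1 ≤ N + 1 - d v := by have := hdN v; omega
      simp only [hσ]
      exact_mod_cast h1
    · intro v
      have h1 : 1 ≤ N + 1 - d v := by have := hdN v; omega
      simp only [hσ]
      exact_mod_cast h1
    · intro a b hab
      have key : ∀ p q : V, G.Adj p q → d p + 1 = d q →
          min (σ q) (σ p) < ⊤ ∧ (σ q ≤ σ p → g q = p) ∧ (σ p ≤ σ q → g p = q) := by
        intro p q hpq hdpq
        have hplt : σ q < σ p := by
          have h1 := hdN p
          have h2 := hdN q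
          have h3 : N + 1 - d q < N + 1 - d p := by omega
          simp only [hσ]
          exact_mod_cast h3
        refine ⟨?_, ?_, ?_⟩
        · exact lt_of_le_of_lt (min_le_left _ _) (ENat.coe_lt_top _)
        · intro _
          have hq0 : d q ≠ 0 := by omega
          obtain ⟨hadj, hdist⟩ := hgspec q hq0
          exact tree_parent_unique hT r hadj.symm hpq hdist hdpq
        · intro hle
          exact absurd hle (not_le.mpr hplt)
      rcases tree_adj_dist hT r hab with h | h
      · -- d a + 1 = d b : a is the parent of b
        obtain ⟨h1, h2, h3⟩ := key a b hab h
        exact ⟨h1, h2, h3⟩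
      · -- d b + 1 = d a : b is the parent of a
        obtain ⟨h1, h2, h3⟩ := key b a hab.symm h
        exact ⟨by rwa [min_comm], h3, h2⟩
end

section
/- For every finite tree G with at least two vertices, the cutting-off-leaves strategy is a correct strategy: for every ordered pair (a, b) of adjacent vertices, at least one of a, b is a leaf of some graph G_n of the pruning sequence (so min(σ(b), σ(a)) is finite), and whenever σ(b) ≤ σ(a), letting n be the least index with b a leaf of G_n, the unique neighbor of b in G_n equals a (and symmetrically with the roles of a and b exchanged). -/
/-- A vertex is a leaf of a simple graph if it has exactly one neighbor. -/
def IsLeafVert {V : Type*} (H : SimpleGraph V) (v : V) : Prop :=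
  ∃! w, H.Adj v w

/-- Remove all leaves of a graph (a removed vertex keeps no incident edges, i.e. becomes
isolated, which models deleting it). -/
def pruneLeaves {V : Type*} (H : SimpleGraph V) : SimpleGraph V where
  Adj u v := H.Adj u v ∧ ¬ IsLeafVert H u ∧ ¬ IsLeafVert H v
  symm := by
    constructor
    intro u v h
    exact ⟨h.1.symm, h.2.2, h.2.1⟩
  loopless := by
    constructor
    intro v h
    exact (H.ne_of_adj h.1) rfl

/-- The pruning sequence: `G_0 = G` and `G_{n+1} = G_n` minus all leaves of `G_n`. -/
def pruneSeq {V : Type*} (G : SimpleGraph V) (n : ℕ) : SimpleGraph V :=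
  pruneLeaves^[n] G

open Classical in
/-- The announcement time of the cutting-off-leaves strategy: observing the other player at
`v`, announce at time `1 + (least n such that v is a leaf of G_n)`, never if no such `n`. -/
noncomputable def cutTime {V : Type*} (G : SimpleGraph V) (v : V) : ℕ∞ :=
  if h : ∃ n, IsLeafVert (pruneSeq G n) v then ((Nat.find h : ℕ∞) + 1) else ⊤


open SimpleGraph

lemma myExistsLeaf {V : Type*} [Fintype V] {H : SimpleGraph V} (hac : H.IsAcyclic)
    {a b : V} (hab : H.Adj a b) : ∃ v, IsLeafVert H v := by
  classical
  set P : ℕ → Prop := fun n => ∃ (u : V) (p : H.Walk a u), p.IsPath ∧ p.length = n with hPdef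
  have hP1 : P 1 := ⟨b, Walk.cons hab Walk.nil, by simp [hab.ne], by simp⟩
  have hbound : ∀ n, P n → n ≤ Fintype.card V := by
    rintro n ⟨u, p, hp, rfl⟩; exact hp.length_lt.le
  obtain ⟨u, p, hp, hlen⟩ : P (Nat.findGreatest P (Fintype.card V)) :=
    Nat.findGreatest_spec (hbound 1 hP1) hP1
  have hk1 : 1 ≤ Nat.findGreatest P (Fintype.card V) :=
    Nat.le_findGreatest (hbound 1 hP1) hP1
  have claim : ∀ x, H.Adj u x → x = p.reverse.getVert 1 := by
    intro x hx
    have hxs : x ∈ p.support := by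
      by_contra hxs
      have hp' : (p.concat hx).IsPath := by
        rw [← Walk.isPath_reverse_iff, Walk.reverse_concat]
        exact ((Walk.isPath_reverse_iff p).2 hp).cons (by simpa using hxs)
      have hle := Nat.le_findGreatest (P := P) (hbound _ ⟨x, p.concat hx, hp', rfl⟩)
        ⟨x, p.concat hx, hp', rfl⟩
      rw [Walk.length_concat, hlen] at hle
      omega
    have hd : (p.dropUntil x hxs).IsPath := hp.dropUntil hxs
    have hsing := hac.path_unique ⟨p.dropUntil x hxs, hd⟩ (Path.singleton hx.symm)
    have hw : p.dropUntil x hxs = Walk.cons hx.symm Walk.nil := congrArg Subtype.val hsing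
    have hspec := p.take_spec hxs
    rw [hw] at hspec
    have heq : p = (p.takeUntil x hxs).concat hx.symm := hspec.symm
    rw [heq, Walk.reverse_concat]
    simp [Walk.getVert_cons_succ, Walk.getVert_zero]
  obtain ⟨c, hc⟩ : ∃ c, H.Adj u c := by
    cases hrev : p.reverse with
    | nil =>
      have h0 := congrArg Walk.length hrev
      rw [Walk.length_reverse] at h0
      simp [hlen] at h0
      omega
    | cons h r => exact ⟨_, h⟩
  exact ⟨u, c, hc, fun y hy => (claim y hy).trans (claim c hc).symm⟩

lemma pruneLeaves_le {V : Type*} (H : SimpleGraph V) : pruneLeaves H ≤ H := fun _ _ h => h.1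

lemma pruneSeq_succ {V : Type*} (G : SimpleGraph V) (n : ℕ) :
    pruneSeq G (n + 1) = pruneLeaves (pruneSeq G n) :=
  Function.iterate_succ_apply' _ _ _

lemma pruneSeq_zero {V : Type*} (G : SimpleGraph V) : pruneSeq G 0 = G := rfl

lemma pruneSeq_le {V : Type*} (G : SimpleGraph V) (n : ℕ) : pruneSeq G n ≤ G := by
  induction n with
  | zero => exact le_rfl
  | succ n ih => rw [pruneSeq_succ]; exact le_trans (pruneLeaves_le _) ih

lemma myIsAcyclicMono {V : Type*} {H G : SimpleGraph V} (h : H ≤ G) (hG : G.IsAcyclic) :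
    H.IsAcyclic := fun _ c hc => hG (c.mapLe h) (hc.mapLe h)

lemma pruneLeaves_ncard_lt {V : Type*} [Fintype V] {H : SimpleGraph V} (hac : H.IsAcyclic)
    {a b : V} (hab : H.Adj a b) :
    (pruneLeaves H).edgeSet.ncard < H.edgeSet.ncard := by
  obtain ⟨v, w, hvw, huniq⟩ := myExistsLeaf hac hab
  have hsub : (pruneLeaves H).edgeSet ⊆ H.edgeSet := edgeSet_mono (pruneLeaves_le H)
  apply Set.ncard_lt_ncard ?_ (H.edgeSet.toFinite)
  rw [Set.ssubset_iff_of_subset hsub]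
  refine ⟨s(v, w), by simpa using hvw, ?_⟩
  intro hmem
  rw [mem_edgeSet] at hmem
  exact hmem.2.1 ⟨w, hvw, huniq⟩

lemma exists_not_adj {V : Type*} [Fintype V] {G : SimpleGraph V} (hac : G.IsAcyclic)
    {a b : V} (hab : G.Adj a b) : ∃ n, ¬ (pruneSeq G n).Adj a b := by
  by_contra h
  push_neg at h
  have key : ∀ n, (pruneSeq G n).edgeSet.ncard + n ≤ G.edgeSet.ncard := by
    intro n
    induction n with
    | zero => simp [pruneSeq_zero]
    | succ n ih =>
      have hlt : (pruneSeq G (n + 1)).edgeSet.ncard < (pruneSeq G n).edgeSet.ncard := by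
        rw [pruneSeq_succ]
        exact pruneLeaves_ncard_lt (myIsAcyclicMono (pruneSeq_le G n) hac) (h n)
      omega
  have := key (G.edgeSet.ncard + 1)
  omega

lemma exists_leaf_or {V : Type*} [Fintype V] {G : SimpleGraph V} (hac : G.IsAcyclic)
    {a b : V} (hab : G.Adj a b) :
    ∃ n, IsLeafVert (pruneSeq G n) a ∨ IsLeafVert (pruneSeq G n) b := by
  classical
  have hex : ∃ m, ¬ (pruneSeq G m).Adj a b := exists_not_adj hac hab
  have hne : Nat.find hex ≠ 0 := by
    intro h0
    have hs := Nat.find_spec hex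
    rw [h0, pruneSeq_zero] at hs
    exact hs hab
  obtain ⟨k, hk⟩ : ∃ k, Nat.find hex = k + 1 := ⟨Nat.find hex - 1, by omega⟩
  have hadjk : (pruneSeq G k).Adj a b := by
    by_contra hcon
    have := Nat.find_le (h := hex) hcon
    omega
  have hnot := Nat.find_spec hex
  rw [hk, pruneSeq_succ] at hnot
  refine ⟨k, ?_⟩
  by_contra hcon
  push_neg at hcon
  exact hnot ⟨hadjk, hcon.1, hcon.2⟩

lemma cutTime_ne_top {V : Type*} [Fintype V] {G : SimpleGraph V} {v : V}
    (h : ∃ n, IsLeafVert (pruneSeq G n) v) : cutTime G v ≠ ⊤ := by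
  rw [cutTime, dif_pos h, ← Nat.cast_one, ← Nat.cast_add]
  exact ENat.coe_ne_top _

lemma cut_correct {V : Type*} [Fintype V] {G : SimpleGraph V} {a b : V} (hab : G.Adj a b)
    (hle : cutTime G b ≤ cutTime G a) (n : ℕ) (hbn : IsLeafVert (pruneSeq G n) b)
    (hmin : ∀ m < n, ¬ IsLeafVert (pruneSeq G m) b) :
    (pruneSeq G n).Adj b a ∧ ∀ w, (pruneSeq G n).Adj b w → w = a := by
  classical
  have hb : ∃ k, IsLeafVert (pruneSeq G k) b := ⟨n, hbn⟩
  have hfind : Nat.find hb = n := by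
    rw [Nat.find_eq_iff]
    exact ⟨hbn, hmin⟩
  have hctb : cutTime G b = (n : ℕ∞) + 1 := by
    rw [cutTime, dif_pos hb, hfind]
  have hanot : ∀ m, m < n → ¬ IsLeafVert (pruneSeq G m) a := by
    intro m hm hma
    have ha : ∃ k, IsLeafVert (pruneSeq G k) a := ⟨m, hma⟩
    have hcta : cutTime G a ≤ (m : ℕ∞) + 1 := by
      rw [cutTime, dif_pos ha]
      exact add_le_add_left (by exact_mod_cast Nat.find_le (h := ha) hma) 1
    rw [hctb] at hle
    have hle2 : (n : ℕ∞) + 1 ≤ (m : ℕ∞) + 1 := le_trans hle hcta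
    have : n + 1 ≤ m + 1 := by exact_mod_cast hle2
    omega
  have hedge : ∀ m, m ≤ n → (pruneSeq G m).Adj a b := by
    intro m
    induction m with
    | zero => intro _; rw [pruneSeq_zero]; exact hab
    | succ k ih =>
      intro hkn
      rw [pruneSeq_succ]
      exact ⟨ih (by omega), hanot k (by omega), hmin k (by omega)⟩
  obtain ⟨w, hw, huniq⟩ := hbn
  have hba : (pruneSeq G n).Adj b a := (hedge n le_rfl).symm
  exact ⟨hba, fun y hy => (huniq y hy).trans (huniq a hba).symm⟩

/-- On a finite tree with at least two vertices, the cutting-off-leaves strategy is correct: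
for every ordered pair `(a, b)` of adjacent vertices, some `G_n` of the pruning sequence has
`a` or `b` as a leaf (so the minimum of the two announcement times is finite), and if the
player observing `b` speaks no later than the player observing `a`, then at the least `n`
where `b` is a leaf of `G_n`, the unique neighbor of `b` in `G_n` is exactly `a`
(and symmetrically). -/
theorem cuttingOffLeaves_correct {V : Type*} [Fintype V] (G : SimpleGraph V)
    (hT : G.IsTree) (hcard : 2 ≤ Fintype.card V) :
    ∀ a b : V, G.Adj a b →
      (∃ n, IsLeafVert (pruneSeq G n) a ∨ IsLeafVert (pruneSeq G n) b) ∧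
      min (cutTime G b) (cutTime G a) < ⊤ ∧
      (cutTime G b ≤ cutTime G a →
        ∀ n : ℕ, IsLeafVert (pruneSeq G n) b → (∀ m < n, ¬ IsLeafVert (pruneSeq G m) b) →
          (pruneSeq G n).Adj b a ∧ ∀ w, (pruneSeq G n).Adj b w → w = a) ∧
      (cutTime G a ≤ cutTime G b →
        ∀ n : ℕ, IsLeafVert (pruneSeq G n) a → (∀ m < n, ¬ IsLeafVert (pruneSeq G m) a) →
          (pruneSeq G n).Adj a b ∧ ∀ w, (pruneSeq G n).Adj a w → w = b) := by
  intro a b hab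
  have hac := hT.IsAcyclic
  have h1 := exists_leaf_or hac hab
  refine ⟨h1, ?_, fun hle n hbn hmin => cut_correct hab hle n hbn hmin,
    fun hle n han hmin => cut_correct hab.symm hle n han hmin⟩
  obtain ⟨n, h | h⟩ := h1
  · exact min_lt_iff.2 (Or.inr (lt_top_iff_ne_top.2 (cutTime_ne_top ⟨n, h⟩)))
  · exact min_lt_iff.2 (Or.inl (lt_top_iff_ne_top.2 (cutTime_ne_top ⟨n, h⟩)))
end

section
/- Let T be a finite tree with a proper 2-coloring of its vertices into classes V_A and V_B, and let (σ_A, g_A, σ_B, g_B) be a correct strategy. If an edge {v, w} is directed toward w and has label n, then for every neighbor u of v with u ≠ w, the edge {u, v} has label ℓ({u, v}) < n. In particular, the labels strictly increase along directed paths of the induced orientation. -/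
/-- Given a proper 2-coloring `c` (with `c = true` the class `V_A` of player A and
`c = false` the class `V_B` of player B), the label of the edge with endpoints `x` and `y`:
for an edge `{u, v}` with `u ∈ V_A` and `v ∈ V_B` the label is `min (σA v) (σB u)`. -/
noncomputable def edgeLabel {V : Type*} (c : V → Bool) (σA σB : V → ℕ∞) (x y : V) : ℕ∞ :=
  if c y then min (σA x) (σB y) else min (σA y) (σB x)

/-- `edgeDirTo c σA σB x y` says the edge `{x, y}` is directed toward `y`, i.e. the player
placed at `y` answers no later than the player placed at `x`: for `u ∈ V_A`, `v ∈ V_B`,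
the edge is directed toward `u` iff `σA v ≤ σB u`, and toward `v` iff `σB u ≤ σA v`. -/
def edgeDirTo {V : Type*} (c : V → Bool) (σA σB : V → ℕ∞) (x y : V) : Prop :=
  if c y then σA x ≤ σB y else σB x ≤ σA y

/-- On a finite tree with a proper 2-coloring, for any correct strategy: if the edge `{v, w}`
is directed toward `w`, then every other edge `{u, v}` at `v` has strictly smaller label.
In particular, labels strictly increase along directed paths of the induced orientation. -/
theorem labels_increase_along_directed_paths {V : Type*} [Fintype V] (T : SimpleGraph V)
    (hT : T.IsTree) (c : V → Bool) (hc : ∀ u v, T.Adj u v → c u ≠ c v)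
    (σA σB : V → ℕ∞) (gA gB : V → V)
    (hA : ∀ v, 1 ≤ σA v) (hB : ∀ v, 1 ≤ σB v)
    (hcorr : CorrectStrategy T σA σB gA gB)
    (v w : V) (hvw : T.Adj v w) (hdir : edgeDirTo c σA σB v w) :
    ∀ u, T.Adj u v → u ≠ w → edgeLabel c σA σB u v < edgeLabel c σA σB v w := by
  intro u huv huw
  have hcv : c v ≠ c w := hc v w hvw
  unfold edgeDirTo at hdir
  unfold edgeLabel
  by_cases hw : c w = true
  · have hcv' : c v = false := by cases h : c v <;> simp_all
    rw [hw] at hdir; simp only [hw, hcv', if_true, if_false]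
    -- hdir : σA v ≤ σB w
    have h1 : gA v = w := (hcorr w v hvw.symm).2.1 hdir
    have h2 : ¬ σA v ≤ σB u := by
      intro h
      exact huw (((hcorr u v huv).2.1 h).symm.trans h1)
    calc min (σA v) (σB u) ≤ σB u := min_le_right _ _
      _ < σA v := lt_of_not_ge h2
      _ = min (σA v) (σB w) := (min_eq_left hdir).symm
  · have hw' : c w = false := by simpa using hw
    have hcv' : c v = true := by cases h : c v <;> simp_all
    simp only [hw', Bool.false_eq_true, if_false] at hdir
    simp only [hw', hcv', Bool.false_eq_true, if_true, if_false]
    -- hdir : σB v ≤ σA w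
    have h1 : gB v = w := (hcorr v w hvw).2.2 hdir
    have h2 : ¬ σB v ≤ σA u := by
      intro h
      exact huw (((hcorr v u huv.symm).2.2 h).symm.trans h1)
    calc min (σA u) (σB v) ≤ σA u := min_le_left _ _
      _ < σB v := lt_of_not_ge h2
      _ = min (σA w) (σB v) := (min_eq_right hdir).symm
end

section
/- Let T be a finite tree with a proper 2-coloring of its vertices into classes V_A and V_B, and let (σ_A, g_A, σ_B, g_B) be a correct strategy. Then in the induced orientation, every vertex v of T has at most one incident edge that is not directed toward v (i.e., at most one incident edge on which the player at the opposite endpoint answers strictly first). -/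
/-- On a finite tree with a proper 2-coloring, for any correct strategy, every vertex `v`
has at most one incident edge which is not directed toward `v` (i.e. at most one incident
edge on which the player at the opposite endpoint answers strictly first). -/
theorem at_most_one_outgoing_edge {V : Type*} [Fintype V] (T : SimpleGraph V)
    (hT : T.IsTree) (c : V → Bool) (hc : ∀ u v, T.Adj u v → c u ≠ c v)
    (σA σB : V → ℕ∞) (gA gB : V → V)
    (hA : ∀ v, 1 ≤ σA v) (hB : ∀ v, 1 ≤ σB v)
    (hcorr : CorrectStrategy T σA σB gA gB) :
    ∀ v u₁ u₂ : V, T.Adj u₁ v → T.Adj u₂ v →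
      ¬ edgeDirTo c σA σB u₁ v → ¬ edgeDirTo c σA σB u₂ v → u₁ = u₂ := by
  intro v u₁ u₂ h1 h2 n1 n2
  unfold edgeDirTo at n1 n2
  cases hcv : c v with
  | true =>
    simp only [hcv, if_true] at n1 n2
    have e1 := (hcorr v u₁ (T.adj_symm h1)).2.2 (le_of_lt (lt_of_not_ge n1))
    have e2 := (hcorr v u₂ (T.adj_symm h2)).2.2 (le_of_lt (lt_of_not_ge n2))
    rw [← e1, ← e2]
  | false =>
    simp only [hcv, Bool.false_eq_true, if_false] at n1 n2
    have e1 := (hcorr u₁ v h1).2.1 (le_of_lt (lt_of_not_ge n1))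
    have e2 := (hcorr u₂ v h2).2.1 (le_of_lt (lt_of_not_ge n2))
    rw [← e1, ← e2]
end

section
/- Let T be a finite tree with at least two vertices, with a proper 2-coloring of its vertices into classes V_A and V_B, and let (σ_A, g_A, σ_B, g_B) be a correct strategy. Call a vertex v a sink if every edge incident to v is directed toward v in the induced orientation. Then there is at least one and at most two sinks; if there are two sinks, they are adjacent and the edge joining them is bidirected (directed toward both endpoints, i.e., both players answer at the same time there); moreover, every bidirected edge joins two sinks, so there is at most one bidirected edge. -/
/-- A vertex is a sink if all its incident edges are directed toward it in the induced
orientation. -/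
def IsSinkVert {V : Type*} (T : SimpleGraph V) (c : V → Bool) (σA σB : V → ℕ∞) (v : V) :
    Prop :=
  ∀ u, T.Adj u v → edgeDirTo c σA σB u v

section Aux
variable {V : Type*} (T : SimpleGraph V) (c : V → Bool) (σA σB : V → ℕ∞) (gA gB : V → V)

lemma dir_total (hc : ∀ u v, T.Adj u v → c u ≠ c v) {u v : V} (h : T.Adj u v) :
    edgeDirTo c σA σB u v ∨ edgeDirTo c σA σB v u := by
  have hcc := hc u v h
  unfold edgeDirTo
  cases hu : c u <;> cases hv : c v <;> simp_all
  · exact le_total _ _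
  · exact le_total _ _

lemma out_uniq (hc : ∀ u v, T.Adj u v → c u ≠ c v)
    (hcorr : CorrectStrategy T σA σB gA gB) {u y y' : V}
    (h1 : T.Adj u y) (h2 : T.Adj u y')
    (d1 : edgeDirTo c σA σB u y) (d2 : edgeDirTo c σA σB u y') : y = y' := by
  have hy := hc u y h1
  have hy' := hc u y' h2
  unfold edgeDirTo at d1 d2
  cases hu : c u
  · have hcy : c y = true := by
      cases hvy : c y
      · exact absurd (hu.trans hvy.symm) hy
      · rfl
    have hcy' : c y' = true := by
      cases hvy : c y'
      · exact absurd (hu.trans hvy.symm) hy'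
      · rfl
    rw [hcy] at d1; rw [hcy'] at d2
    simp only [if_true] at d1 d2
    have e1 := (hcorr y u h1.symm).2.1 d1
    have e2 := (hcorr y' u h2.symm).2.1 d2
    rw [← e1, ← e2]
  · have hcy : c y = false := by
      cases hvy : c y
      · rfl
      · exact absurd (hu.trans hvy.symm) hy
    have hcy' : c y' = false := by
      cases hvy : c y'
      · rfl
      · exact absurd (hu.trans hvy.symm) hy'
    rw [hcy] at d1; rw [hcy'] at d2
    rw [if_neg Bool.false_ne_true] at d1
    rw [if_neg Bool.false_ne_true] at d2
    have e1 := (hcorr u y h1).2.2 d1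
    have e2 := (hcorr u y' h2).2.2 d2
    rw [← e1, ← e2]

/-- potential -/
noncomputable def pot (v : V) : ℕ∞ := if c v then σB v else σA v

lemma pot_lt (hc : ∀ u v, T.Adj u v → c u ≠ c v) {u v : V} (h : T.Adj u v)
    (hnd : ¬ edgeDirTo c σA σB u v) : pot c σA σB v < pot c σA σB u := by
  have hcc := hc u v h
  unfold edgeDirTo at hnd
  unfold pot
  cases hu : c u
  · have hv : c v = true := by
      cases hvv : c v
      · exact absurd (hu.trans hvv.symm) hcc
      · rfl
    rw [hv] at hnd
    rw [if_pos rfl] at hnd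
    simpa [hv, hu] using lt_of_not_ge hnd
  · have hv : c v = false := by
      cases hvv : c v
      · rfl
      · exact absurd (hu.trans hvv.symm) hcc
    rw [hv] at hnd
    rw [if_neg Bool.false_ne_true] at hnd
    simpa [hv, hu] using lt_of_not_ge hnd

lemma exists_sink [Finite V] [Nonempty V] (hc : ∀ u v, T.Adj u v → c u ≠ c v) :
    ∃ v, IsSinkVert T c σA σB v := by
  obtain ⟨v, hv⟩ := Finite.exists_max (pot c σA σB)
  refine ⟨v, fun u hu => ?_⟩
  by_contra hnd
  exact absurd (hv u) (not_le_of_gt (pot_lt T c σA σB hc hu hnd))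

lemma strict_chain (hc : ∀ u v, T.Adj u v → c u ≠ c v)
    (hcorr : CorrectStrategy T σA σB gA gB) (b : V) :
    ∀ (x : V) (q : T.Walk x b), q.IsPath →
      ∀ a, T.Adj x a → a ∉ q.support → ¬ edgeDirTo c σA σB a x →
      ¬ IsSinkVert T c σA σB b := by
  intro x q
  induction q with
  | nil =>
    intro _ a hxa _ hnd hs
    exact hnd (hs a hxa.symm)
  | @cons x y b h' q' ih =>
    intro hp a hxa hans hnd
    rw [SimpleGraph.Walk.cons_isPath_iff] at hp
    refine ih hp.1 x h'.symm hp.2 ?_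
    intro dxy
    have dxa : edgeDirTo c σA σB x a := by
      rcases dir_total T c σA σB hc hxa with h | h
      · exact h
      · exact absurd h hnd
    have : y = a := out_uniq T c σA σB gA gB hc hcorr h' hxa dxy dxa
    apply hans
    rw [SimpleGraph.Walk.support_cons, ← this]
    exact List.mem_cons_of_mem _ (SimpleGraph.Walk.start_mem_support q')

lemma bidir_sinks (hc : ∀ u v, T.Adj u v → c u ≠ c v)
    (hcorr : CorrectStrategy T σA σB gA gB) {u v : V} (h : T.Adj u v)
    (d1 : edgeDirTo c σA σB u v) (d2 : edgeDirTo c σA σB v u) :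
    IsSinkVert T c σA σB u ∧ IsSinkVert T c σA σB v := by
  have key : ∀ u v : V, T.Adj u v → edgeDirTo c σA σB u v → edgeDirTo c σA σB v u →
      IsSinkVert T c σA σB u := by
    intro u v h d1 d2 w hw
    by_contra hnd
    have duw : edgeDirTo c σA σB u w := by
      rcases dir_total T c σA σB hc hw with h' | h'
      · exact absurd h' hnd
      · exact h'
    have : w = v := out_uniq T c σA σB gA gB hc hcorr hw.symm h duw d1
    exact hnd (this ▸ d2)
  exact ⟨key u v h d1 d2, key v u h.symm d2 d1⟩

lemma sinks_adj (hc : ∀ u v, T.Adj u v → c u ≠ c v)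
    (hcorr : CorrectStrategy T σA σB gA gB) :
    ∀ (v₁ v₂ : V) (p : T.Walk v₁ v₂), p.IsPath →
      IsSinkVert T c σA σB v₁ → IsSinkVert T c σA σB v₂ → v₁ ≠ v₂ → T.Adj v₁ v₂ := by
  intro v₁ v₂ p
  induction p with
  | nil => intro _ _ _ hne; exact absurd rfl hne
  | @cons v₁ x v₂ h q ih =>
    intro hp hs1 hs2 hne
    rw [SimpleGraph.Walk.cons_isPath_iff] at hp
    by_cases hxv : x = v₂
    · exact hxv ▸ h
    have hdx1 : edgeDirTo c σA σB x v₁ := hs1 x h.symm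
    by_cases hd1x : edgeDirTo c σA σB v₁ x
    · have hsx := (bidir_sinks T c σA σB gA gB hc hcorr h hd1x hdx1).2
      have hadj : T.Adj x v₂ := ih hp.1 hsx hs2 hxv
      have dxv2 : edgeDirTo c σA σB x v₂ := hs2 x hadj
      exact absurd (out_uniq T c σA σB gA gB hc hcorr h.symm hadj hdx1 dxv2) hne
    · exact absurd (strict_chain T c σA σB gA gB hc hcorr v₂ x q hp.1 v₁ h.symm hp.2 hd1x)
        (not_not_intro hs2)

end Aux

/-- On a finite tree with at least two vertices, with a proper 2-coloring, for any correct
strategy: there is at least one and at most two sinks; two distinct sinks are adjacent and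
joined by a bidirected edge; every bidirected edge joins two sinks; and there is at most one
bidirected edge. -/
theorem sinks_of_correct_strategy {V : Type*} [Fintype V] (T : SimpleGraph V)
    (hT : T.IsTree) (hcard : 2 ≤ Fintype.card V)
    (c : V → Bool) (hc : ∀ u v, T.Adj u v → c u ≠ c v)
    (σA σB : V → ℕ∞) (gA gB : V → V)
    (hA : ∀ v, 1 ≤ σA v) (hB : ∀ v, 1 ≤ σB v)
    (hcorr : CorrectStrategy T σA σB gA gB) :
    (∃ v, IsSinkVert T c σA σB v) ∧
    (∀ v₁ v₂ v₃, IsSinkVert T c σA σB v₁ → IsSinkVert T c σA σB v₂ →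
      IsSinkVert T c σA σB v₃ → v₁ = v₂ ∨ v₁ = v₃ ∨ v₂ = v₃) ∧
    (∀ v₁ v₂, IsSinkVert T c σA σB v₁ → IsSinkVert T c σA σB v₂ → v₁ ≠ v₂ →
      T.Adj v₁ v₂ ∧ edgeDirTo c σA σB v₁ v₂ ∧ edgeDirTo c σA σB v₂ v₁) ∧
    (∀ u v, T.Adj u v → edgeDirTo c σA σB u v → edgeDirTo c σA σB v u →
      IsSinkVert T c σA σB u ∧ IsSinkVert T c σA σB v) ∧
    (∀ u v u' v', T.Adj u v → T.Adj u' v' →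
      edgeDirTo c σA σB u v → edgeDirTo c σA σB v u →
      edgeDirTo c σA σB u' v' → edgeDirTo c σA σB v' u' →
      (u = u' ∧ v = v') ∨ (u = v' ∧ v = u')) := by

  classical
  have hNe : Nonempty V := Fintype.card_pos_iff.mp (by omega)
  have hadj : ∀ v₁ v₂, IsSinkVert T c σA σB v₁ → IsSinkVert T c σA σB v₂ → v₁ ≠ v₂ →
      T.Adj v₁ v₂ := by
    intro v₁ v₂ s1 s2 hne
    obtain ⟨w⟩ := hT.isConnected v₁ v₂
    exact sinks_adj T c σA σB gA gB hc hcorr v₁ v₂ w.toPath.1 w.toPath.2 s1 s2 hne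
  have part2 : ∀ v₁ v₂ v₃, IsSinkVert T c σA σB v₁ → IsSinkVert T c σA σB v₂ →
      IsSinkVert T c σA σB v₃ → v₁ = v₂ ∨ v₁ = v₃ ∨ v₂ = v₃ := by
    intro v₁ v₂ v₃ s1 s2 s3
    by_contra hcon
    push_neg at hcon
    obtain ⟨h12, h13, h23⟩ := hcon
    have c12 := hc _ _ (hadj v₁ v₂ s1 s2 h12)
    have c13 := hc _ _ (hadj v₁ v₃ s1 s3 h13)
    have c23 := hc _ _ (hadj v₂ v₃ s2 s3 h23)
    cases hb1 : c v₁ <;> cases hb2 : c v₂ <;> cases hb3 : c v₃ <;> simp_all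
  refine ⟨exists_sink T c σA σB hc, part2, ?_, ?_, ?_⟩
  · intro v₁ v₂ s1 s2 hne
    have h := hadj v₁ v₂ s1 s2 hne
    exact ⟨h, s2 v₁ h, s1 v₂ h.symm⟩
  · intro u v huv d1 d2
    exact bidir_sinks T c σA σB gA gB hc hcorr huv d1 d2
  · intro u v u' v' huv hu'v' d1 d2 d3 d4
    obtain ⟨su, sv⟩ := bidir_sinks T c σA σB gA gB hc hcorr huv d1 d2
    obtain ⟨su', sv'⟩ := bidir_sinks T c σA σB gA gB hc hcorr hu'v' d3 d4
    have hne : u ≠ v := huv.ne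
    have hne' : u' ≠ v' := hu'v'.ne
    rcases part2 u v u' su sv su' with h1 | h1 | h1
    · exact absurd h1 hne
    · rcases part2 u v v' su sv sv' with h2 | h2 | h2
      · exact absurd h2 hne
      · exact absurd (h1.symm.trans h2) hne'
      · exact Or.inl ⟨h1, h2⟩
    · rcases part2 u v v' su sv sv' with h2 | h2 | h2
      · exact absurd h2 hne
      · exact Or.inr ⟨h2, h1⟩
      · exact absurd (h1.symm.trans h2) hne'
end

section
/- Cutting off leaves is the fastest strategy: let T be a finite tree, let (σ_A, g_A, σ_B, g_B) be any correct strategy, and let (a, b) be any ordered pair of adjacent vertices. Then min(σ_A(b), σ_B(a)) ≥ min(h_a(b), h_b(a)); that is, under any correct strategy the first correct announcement on the edge {a, b} occurs no earlier than the time min(h_a(b), h_b(a)) achieved by the cutting-off-leaves strategy. -/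
/-- The height of `v` in the tree rooted at `a`:
`1 +` the maximum of `dist v w` over all vertices `w` such that `v` lies on the (unique)
path from `a` to `w`, the latter being expressed by `dist a w = dist a v + dist v w`. -/
noncomputable def rootedHeight {V : Type*} [Fintype V] (T : SimpleGraph V) (a v : V) : ℕ :=
  1 + (Finset.univ.filter fun w => T.dist a w = T.dist a v + T.dist v w).sup
        fun w => T.dist v w

section Aux

variable {V : Type*} {T : SimpleGraph V}

/-- In a tree, every path realizes the distance. -/
lemma aux_path_length_eq_dist (hT : T.IsTree) {u v : V} (p : T.Walk u v) (hp : p.IsPath) :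
    p.length = T.dist u v := by
  obtain ⟨q, hq, hql⟩ := hT.isConnected.exists_path_of_dist u v
  rw [(hT.existsUnique_path u v).unique hp hq, hql]

/-- A vertex on a walk of minimal length splits the distance. -/
lemma aux_mem_support_dist {u v w : V} (q : T.Walk u v) (hql : q.length = T.dist u v)
    (hw : w ∈ q.support) : T.dist u w + T.dist w v ≤ T.dist u v := by
  classical
  have h1 : T.dist u w ≤ (q.takeUntil w hw).length := SimpleGraph.dist_le _
  have h2 : T.dist w v ≤ (q.dropUntil w hw).length := SimpleGraph.dist_le _
  have h3 : (q.takeUntil w hw).length + (q.dropUntil w hw).length = q.length := by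
    rw [← SimpleGraph.Walk.length_append, SimpleGraph.Walk.take_spec]
  omega

/-- In a tree, neighbors have distances to any vertex differing by exactly one. -/
lemma aux_adj_dist (hT : T.IsTree) {b b' : V} (x : V) (h : T.Adj b b') :
    T.dist b' x = T.dist b x + 1 ∨ T.dist b x = T.dist b' x + 1 := by
  have hbb' : T.dist b b' = 1 := SimpleGraph.dist_eq_one_iff_adj.mpr h
  have hb'b : T.dist b' b = 1 := SimpleGraph.dist_eq_one_iff_adj.mpr h.symm
  have t1 : T.dist b' x ≤ T.dist b' b + T.dist b x := hT.isConnected.dist_triangle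
  have t2 : T.dist b x ≤ T.dist b b' + T.dist b' x := hT.isConnected.dist_triangle
  have hne : T.dist b x ≠ T.dist b' x := by
    intro heq
    obtain ⟨q, hq, hql⟩ := hT.isConnected.exists_path_of_dist b' x
    have hbq : b ∉ q.support := by
      intro hmem
      have := aux_mem_support_dist q hql hmem
      omega
    have hpath : (SimpleGraph.Walk.cons h q).IsPath := hq.cons hbq
    have := aux_path_length_eq_dist hT _ hpath
    rw [SimpleGraph.Walk.length_cons, hql] at this
    omega
  omega

/-- In a tree, the neighbor strictly closer to a given vertex is unique. -/
lemma aux_toward_unique (hT : T.IsTree) {b x a b' : V} (ha : T.Adj b a) (hb : T.Adj b b')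
    (h1 : T.dist a x + 1 = T.dist b x) (h2 : T.dist b' x + 1 = T.dist b x) : a = b' := by
  have hba : T.dist b a = 1 := SimpleGraph.dist_eq_one_iff_adj.mpr ha
  have hbb' : T.dist b b' = 1 := SimpleGraph.dist_eq_one_iff_adj.mpr hb
  obtain ⟨qa, hqa, hqal⟩ := hT.isConnected.exists_path_of_dist a x
  obtain ⟨qb, hqb, hqbl⟩ := hT.isConnected.exists_path_of_dist b' x
  have hba' : b ∉ qa.support := by
    intro hmem
    have := aux_mem_support_dist qa hqal hmem
    rw [show T.dist a b = T.dist b a from SimpleGraph.dist_comm] at this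
    omega
  have hbb'' : b ∉ qb.support := by
    intro hmem
    have := aux_mem_support_dist qb hqbl hmem
    rw [show T.dist b' b = T.dist b b' from SimpleGraph.dist_comm] at this
    omega
  have hpa : (SimpleGraph.Walk.cons ha qa).IsPath := hqa.cons hba'
  have hpb : (SimpleGraph.Walk.cons hb qb).IsPath := hqb.cons hbb''
  have heq : SimpleGraph.Walk.cons ha qa = SimpleGraph.Walk.cons hb qb :=
    (hT.existsUnique_path b x).unique hpa hpb
  have : (SimpleGraph.Walk.cons ha qa).getVert 1 = (SimpleGraph.Walk.cons hb qb).getVert 1 := by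
    rw [heq]
  simpa [SimpleGraph.Walk.getVert] using this

/-- In a connected graph every vertex at positive distance has a strictly closer neighbor. -/
lemma aux_exists_closer (hconn : T.Connected) {b w : V} (h : T.dist b w ≠ 0) :
    ∃ b', T.Adj b b' ∧ T.dist b' w + 1 = T.dist b w := by
  obtain ⟨p, hpl⟩ := (hconn b w).exists_walk_length_eq_dist
  cases p with
  | nil => simp at hpl; exact absurd SimpleGraph.dist_self h
  | cons hadj q =>
    rename_i b''
    refine ⟨b'', hadj, ?_⟩
    have h1 : T.dist b'' w ≤ q.length := SimpleGraph.dist_le _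
    have h2 : T.dist b w ≤ T.dist b b'' + T.dist b'' w := hconn.dist_triangle
    have hb : T.dist b b'' = 1 := SimpleGraph.dist_eq_one_iff_adj.mpr hadj
    simp only [SimpleGraph.Walk.length_cons] at hpl
    omega

variable [Fintype V]

lemma aux_rh_ge (a v w : V) (hw : T.dist a w = T.dist a v + T.dist v w) :
    1 + T.dist v w ≤ rootedHeight T a v := by
  unfold rootedHeight
  have hmem : w ∈ Finset.univ.filter fun w => T.dist a w = T.dist a v + T.dist v w := by
    simp [hw]
  exact add_le_add_right (Finset.le_sup (f := fun w => T.dist v w) hmem) 1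

lemma aux_rh_exists (a v : V) :
    ∃ w, T.dist a w = T.dist a v + T.dist v w ∧ rootedHeight T a v = 1 + T.dist v w := by
  have hne : (Finset.univ.filter fun w => T.dist a w = T.dist a v + T.dist v w).Nonempty := by
    refine ⟨v, ?_⟩
    simp [SimpleGraph.dist_self]
  obtain ⟨w, hwmem, hsup⟩ := Finset.exists_mem_eq_sup _ hne (fun w => T.dist v w)
  simp only [Finset.mem_filter] at hwmem
  exact ⟨w, hwmem.2, by rw [rootedHeight, hsup]⟩

/-- Key combinatorial step: a deep enough neighbor exists. -/
lemma aux_key (hT : T.IsTree) {a b : V} (hab : T.Adj a b) (h2 : 2 ≤ rootedHeight T a b) :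
    ∃ b', T.Adj b b' ∧ b' ≠ a ∧ rootedHeight T a b ≤ 1 + rootedHeight T b b' ∧
      rootedHeight T b a ≤ rootedHeight T b' b := by
  have hconn := hT.isConnected
  have dab : T.dist a b = 1 := SimpleGraph.dist_eq_one_iff_adj.mpr hab
  have dba : T.dist b a = 1 := SimpleGraph.dist_eq_one_iff_adj.mpr hab.symm
  obtain ⟨w, hw, hrw⟩ := aux_rh_exists (T := T) a b
  have hbw : T.dist b w ≠ 0 := by omega
  obtain ⟨b', hadj, hb'w⟩ := aux_exists_closer hconn hbw
  have dbb' : T.dist b b' = 1 := SimpleGraph.dist_eq_one_iff_adj.mpr hadj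
  have db'b : T.dist b' b = 1 := SimpleGraph.dist_eq_one_iff_adj.mpr hadj.symm
  have hb'a : b' ≠ a := by
    rintro rfl
    omega
  refine ⟨b', hadj, hb'a, ?_, ?_⟩
  · have := aux_rh_ge (T := T) b b' w (by omega)
    omega
  · obtain ⟨w2, hw2, hrw2⟩ := aux_rh_exists (T := T) b a
    have hcase : T.dist b' w2 = T.dist b w2 + 1 := by
      rcases aux_adj_dist hT w2 hadj with h | h
      · exact h
      · exact absurd (aux_toward_unique (x := w2) hT hab.symm hadj (by omega) (by omega)) (fun h => hb'a h.symm)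
    have := aux_rh_ge (T := T) b' b w2 (by omega)
    omega

end Aux

/-- Cutting off leaves is the fastest strategy: for any correct strategy on a finite tree
and any ordered pair `(a, b)` of adjacent vertices, the first correct announcement on the
edge `{a, b}` occurs no earlier than time `min (h_a(b), h_b(a))`, the time achieved by the
cutting-off-leaves strategy. -/
theorem cuttingOffLeaves_is_fastest {V : Type*} [Fintype V] (T : SimpleGraph V)
    (hT : T.IsTree)
    (σA σB : V → ℕ∞) (gA gB : V → V)
    (hA : ∀ v, 1 ≤ σA v) (hB : ∀ v, 1 ≤ σB v)
    (hcorr : CorrectStrategy T σA σB gA gB) :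
    ∀ a b : V, T.Adj a b →
      ((min (rootedHeight T a b) (rootedHeight T b a) : ℕ) : ℕ∞) ≤ min (σA b) (σB a) := by
  suffices H : ∀ m : ℕ, ∀ a b : V, T.Adj a b →
      m ≤ min (rootedHeight T a b) (rootedHeight T b a) →
      ((m : ℕ) : ℕ∞) ≤ min (σA b) (σB a) by
    intro a b hab
    exact H _ a b hab le_rfl
  intro m
  induction m with
  | zero => intro a b _ _; simp
  | succ m ih =>
    intro a b hab hm
    rcases Nat.eq_zero_or_pos m with rfl | hm1
    · simpa using le_min (hA b) (hB a)
    · rw [le_min_iff] at hm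
      by_cases hle : σA b ≤ σB a
      · obtain ⟨b', hbb', hb'a, hk1, hk2⟩ := aux_key hT hab (by omega)
        have hmin : m ≤ min (rootedHeight T b' b) (rootedHeight T b b') := by
          rw [le_min_iff]; omega
        have hIH := ih b' b hbb'.symm hmin
        have hgA : gA b = a := (hcorr a b hab).2.1 hle
        have hstrict : σB b' < σA b := by
          by_contra hcon
          push_neg at hcon
          exact hb'a (hgA ▸ ((hcorr b' b hbb'.symm).2.1 hcon).symm ▸ rfl)
        have h1 : (m : ℕ∞) ≤ σB b' := hIH.trans (min_le_right _ _)
        have h2' : σB b' + 1 ≤ σA b := Order.add_one_le_of_lt hstrict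
        have hfin : ((m + 1 : ℕ) : ℕ∞) ≤ σA b := by
          push_cast
          calc (m : ℕ∞) + 1 ≤ σB b' + 1 := add_le_add_left h1 1
            _ ≤ σA b := h2'
        exact le_min hfin (hfin.trans hle)
      · push_neg at hle
        obtain ⟨a', haa', ha'b, hk1, hk2⟩ := aux_key hT hab.symm (by omega)
        have hmin : m ≤ min (rootedHeight T a a') (rootedHeight T a' a) := by
          rw [le_min_iff]; omega
        have hIH := ih a a' haa' hmin
        have hgB : gB a = b := (hcorr a b hab).2.2 hle.le
        have hstrict : σA a' < σB a := by
          by_contra hcon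
          push_neg at hcon
          exact ha'b (hgB ▸ ((hcorr a a' haa').2.2 hcon).symm ▸ rfl)
        have h1 : (m : ℕ∞) ≤ σA a' := hIH.trans (min_le_left _ _)
        have h2' : σA a' + 1 ≤ σB a := Order.add_one_le_of_lt hstrict
        have hfin : ((m + 1 : ℕ) : ℕ∞) ≤ σB a := by
          push_cast
          calc (m : ℕ∞) + 1 ≤ σA a' + 1 := add_le_add_left h1 1
            _ ≤ σB a := h2'
        exact le_min (hfin.trans hle.le) hfin
end

section
/- Whether the players speak simultaneously or alternately makes no difference to which edges can be guessed when a strategy may be agreed on in advance: for every finite simple graph G and every set S of edges of G, there exists a strategy that is correct on every ordered pair (a, b) of adjacent vertices with {a, b} ∈ S if and only if there exists an alternating strategy (with A the starting player) that is correct on every such ordered pair. -/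
/-- A strategy `(σA, gA, σB, gB)` is correct on the set `S` of edges of the simple graph `G`
if for every ordered pair `(a, b)` of adjacent vertices whose edge lies in `S` (player A
placed at `a`, player B at `b`): at least one player eventually speaks, and whoever speaks
first (or at a tie, both) announces their own vertex correctly. -/
def CorrectOn {V : Type*} (G : SimpleGraph V) (S : Set (Sym2 V))
    (σA σB : V → ℕ∞) (gA gB : V → V) : Prop :=
  ∀ a b : V, G.Adj a b → s(a, b) ∈ S →
    min (σA b) (σB a) < ⊤ ∧ (σA b ≤ σB a → gA b = a) ∧ (σB a ≤ σA b → gB a = b)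

lemma myMap_natCast (f : ℕ → ℕ) (n : ℕ) :
    WithTop.map f (n : ℕ∞) = ((f n : ℕ) : ℕ∞) := rfl

lemma myMap_top (f : ℕ → ℕ) : WithTop.map f (⊤ : ℕ∞) = (⊤ : ℕ∞) := rfl

/-- Whether the players speak simultaneously or alternately makes no difference to which
edges can be guessed when a strategy may be agreed on in advance: for every finite simple
graph `G` and every set `S` of edges of `G`, there is a strategy correct on `S` iff there
is an alternating strategy (A, the starting player, speaking only at odd times and B only
at even times) correct on `S`. -/
theorem simultaneous_iff_alternating {V : Type*} [Fintype V] (G : SimpleGraph V)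
    (S : Set (Sym2 V)) (hS : S ⊆ G.edgeSet) :
    (∃ (σA σB : V → ℕ∞) (gA gB : V → V),
      (∀ v, 1 ≤ σA v) ∧ (∀ v, 1 ≤ σB v) ∧ CorrectOn G S σA σB gA gB) ↔
    (∃ (σA σB : V → ℕ∞) (gA gB : V → V),
      (∀ v, 1 ≤ σA v) ∧ (∀ v, 1 ≤ σB v) ∧
      (∀ v, ∀ n : ℕ, σA v = (n : ℕ∞) → Odd n) ∧
      (∀ v, ∀ n : ℕ, σB v = (n : ℕ∞) → Even n) ∧
      CorrectOn G S σA σB gA gB) := by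
  constructor
  · rintro ⟨σA, σB, gA, gB, h1, h2, hC⟩
    refine ⟨fun v => (WithTop.map (fun n => 2 * n - 1) (σA v) : ℕ∞),
      fun v => (WithTop.map (fun n => 2 * n) (σB v) : ℕ∞), gA, gB, ?_, ?_, ?_, ?_, ?_⟩
    · intro v
      cases h : σA v with
      | top => simp [h, myMap_top]
      | coe n =>
        have := h1 v; rw [h] at this
        have hn : 1 ≤ n := by exact_mod_cast this
        simp only [h, myMap_natCast]
        exact_mod_cast (by omega : 1 ≤ 2 * n - 1)
    · intro v
      cases h : σB v with
      | top => simp [h, myMap_top]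
      | coe n =>
        have := h2 v; rw [h] at this
        have hn : 1 ≤ n := by exact_mod_cast this
        simp only [h, myMap_natCast]
        exact_mod_cast (by omega : 1 ≤ 2 * n)
    · intro v m hm
      cases h : σA v with
      | top => simp only [h, myMap_top] at hm; exact (ENat.coe_ne_top m hm.symm).elim
      | coe n =>
        have := h1 v; rw [h] at this
        have hn : 1 ≤ n := by exact_mod_cast this
        simp only [h, myMap_natCast] at hm
        have : 2 * n - 1 = m := by exact_mod_cast hm
        exact ⟨n - 1, by omega⟩
    · intro v m hm
      cases h : σB v with
      | top => simp only [h, myMap_top] at hm; exact (ENat.coe_ne_top m hm.symm).elim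
      | coe n =>
        simp only [h, myMap_natCast] at hm
        have : 2 * n = m := by exact_mod_cast hm
        exact ⟨n, by omega⟩
    · intro a b hab hS'
      obtain ⟨hmin, hA, hB⟩ := hC a b hab hS'
      have ha1 := h1 b
      have hb1 := h2 a
      simp only
      cases hA' : σA b with
      | top =>
        cases hB' : σB a with
        | top => rw [hA', hB'] at hmin; simp at hmin
        | coe m =>
          refine ⟨?_, ?_, ?_⟩
          · rw [myMap_natCast]; exact lt_of_le_of_lt (min_le_right _ _) (ENat.coe_lt_top _)
          · intro hle
            rw [myMap_top, myMap_natCast, top_le_iff] at hle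
            exact (ENat.coe_ne_top _ hle).elim
          · intro _
            exact hB (by rw [hA', hB']; exact le_top)
      | coe n =>
        have hn : 1 ≤ n := by rw [hA'] at ha1; exact_mod_cast ha1
        cases hB' : σB a with
        | top =>
          refine ⟨?_, ?_, ?_⟩
          · rw [myMap_natCast]; exact lt_of_le_of_lt (min_le_left _ _) (ENat.coe_lt_top _)
          · intro _
            exact hA (by rw [hA', hB']; exact le_top)
          · intro hle
            rw [myMap_top, myMap_natCast, top_le_iff] at hle
            exact (ENat.coe_ne_top _ hle).elim
        | coe m =>
          refine ⟨?_, ?_, ?_⟩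
          · rw [myMap_natCast]; exact lt_of_le_of_lt (min_le_left _ _) (ENat.coe_lt_top _)
          · intro hle
            rw [myMap_natCast, myMap_natCast, Nat.cast_le] at hle
            exact hA (by rw [hA', hB']; exact_mod_cast (by omega : n ≤ m))
          · intro hle
            rw [myMap_natCast, myMap_natCast, Nat.cast_le] at hle
            exact hB (by rw [hA', hB']; exact_mod_cast (by omega : m ≤ n))
  · rintro ⟨σA, σB, gA, gB, h1, h2, _, _, hC⟩
    exact ⟨σA, σB, gA, gB, h1, h2, hC⟩
end

section
/- For every finite tree T there is a strategy allowing both players to determine their position on every edge: there exists a correct strategy (σ_A, g_A, σ_B, g_B) on T with the additional property that, for every ordered pair (a, b) of adjacent vertices, if σ_A(b) < σ_B(a) then b is the only neighbor b' of a with σ_A(b') = σ_A(b), and if σ_B(a) < σ_A(b) then a is the only neighbor a' of b with σ_B(a') = σ_B(a). (This uniqueness means the silent player can infer their own vertex from the time of the other player's announcement.) -/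
/-- For every finite tree there is a correct strategy allowing both players to determine
their position on every edge: whenever one player strictly answers first, the observed
announcement time determines the silent player's own vertex uniquely among the neighbors
of the vertex the silent player sees. -/
theorem exists_strategy_both_players_learn {V : Type*} [Fintype V] (T : SimpleGraph V)
    (hT : T.IsTree) :
    ∃ (σA σB : V → ℕ∞) (gA gB : V → V),
      (∀ v, 1 ≤ σA v) ∧ (∀ v, 1 ≤ σB v) ∧ CorrectStrategy T σA σB gA gB ∧
      ∀ a b : V, T.Adj a b →
        (σA b < σB a → ∀ b', T.Adj a b' → σA b' = σA b → b' = b) ∧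
        (σB a < σA b → ∀ a', T.Adj b a' → σB a' = σB a → a' = a) := by
  classical
  obtain ⟨r⟩ := hT.isConnected.nonempty
  have hpath : ∀ v : V, ∃ q : T.Walk v r, q.IsPath := by
    intro v
    obtain ⟨w⟩ := hT.isConnected.preconnected v r
    exact ⟨w.toPath.1, w.toPath.2⟩
  choose p hp using hpath
  set d : V → ℕ := fun v => (p v).length with hd
  set parent : V → V := fun v => (p v).getVert 1 with hparent
  -- the key structural dichotomy for edges of a tree
  have key : ∀ a b : V, T.Adj a b →
      (d b = d a + 1 ∧ parent b = a) ∨ (d a = d b + 1 ∧ parent a = b) := by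
    intro a b hab
    by_cases hb : b ∈ (p a).support
    · right
      have ht : ((p a).takeUntil b hb).IsPath := (hp a).takeUntil hb
      have hdr : ((p a).dropUntil b hb).IsPath := (hp a).dropUntil hb
      have h1 : ((p a).takeUntil b hb) = SimpleGraph.Walk.cons hab SimpleGraph.Walk.nil := by
        have := hT.IsAcyclic.path_unique ⟨(p a).takeUntil b hb, ht⟩
          (SimpleGraph.Path.singleton hab)
        exact congrArg Subtype.val this
      have h2 : ((p a).dropUntil b hb) = p b := by
        have := hT.IsAcyclic.path_unique ⟨(p a).dropUntil b hb, hdr⟩ ⟨p b, hp b⟩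
        exact congrArg Subtype.val this
      have h3 : p a = SimpleGraph.Walk.cons hab (p b) := by
        conv_lhs => rw [← (p a).take_spec hb]
        rw [h1, h2]
        simp
      constructor
      · simp [hd, h3]
      · simp [hparent, h3]
    · left
      have hq : (SimpleGraph.Walk.cons hab.symm (p a)).IsPath := by
        rw [SimpleGraph.Walk.cons_isPath_iff]
        exact ⟨hp a, hb⟩
      have h2 : p b = SimpleGraph.Walk.cons hab.symm (p a) := by
        have := hT.IsAcyclic.path_unique ⟨p b, hp b⟩ ⟨_, hq⟩
        exact congrArg Subtype.val this
      constructor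
      · simp [hd, h2]
      · simp [hparent, h2]
  have hdlt : ∀ v, d v < Fintype.card V := fun v => (hp v).length_lt
  set C : ℕ := Fintype.card V with hC
  set e : V ≃ Fin C := Fintype.equivFin V with he
  set σ : V → ℕ := fun v => C * (C - d v) + (e v).val + 1 with hσ
  have mono : ∀ u v : V, d v < d u → σ u < σ v := by
    intro u v h
    have h1 : C - d u + 1 ≤ C - d v := by have := hdlt u; omega
    have h2 : C * (C - d u + 1) ≤ C * (C - d v) := Nat.mul_le_mul_left _ h1
    have h3 : (e u).val < C := (e u).isLt
    have h4 : C * (C - d u + 1) = C * (C - d u) + C := by ring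
    simp only [hσ]
    omega
  have inj : Function.Injective σ := by
    intro u v h
    rcases lt_trichotomy (d u) (d v) with hlt | heq | hgt
    · exact absurd h (by have := mono v u hlt; omega)
    · have : (e u).val = (e v).val := by simp only [hσ, heq] at h; omega
      exact e.injective (Fin.ext this)
    · exact absurd h (by have := mono u v hgt; omega)
  have hσ1 : ∀ v, 1 ≤ σ v := by intro v; simp [hσ]
  refine ⟨fun v => (σ v : ℕ∞), fun v => (σ v : ℕ∞), parent, parent, ?_, ?_, ?_, ?_⟩
  · intro v
    show (1 : ℕ∞) ≤ (σ v : ℕ∞)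
    exact_mod_cast hσ1 v
  · intro v
    show (1 : ℕ∞) ≤ (σ v : ℕ∞)
    exact_mod_cast hσ1 v
  · intro a b hab
    refine ⟨lt_of_le_of_lt (min_le_left _ _) (ENat.coe_lt_top _), ?_, ?_⟩
    · intro hle
      beta_reduce at hle
      have hle' : σ b ≤ σ a := by exact_mod_cast hle
      rcases key a b hab with ⟨_, h⟩ | ⟨hda, _⟩
      · exact h
      · exact absurd hle' (by have := mono a b (by omega); omega)
    · intro hle
      beta_reduce at hle
      have hle' : σ a ≤ σ b := by exact_mod_cast hle
      rcases key a b hab with ⟨hdb, _⟩ | ⟨_, h⟩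
      · exact absurd hle' (by have := mono b a (by omega); omega)
      · exact h
  · intro a b _
    constructor
    · intro _ b' _ heq
      beta_reduce at heq
      exact inj (by exact_mod_cast heq)
    · intro _ a' _ heq
      beta_reduce at heq
      exact inj (by exact_mod_cast heq)
end

section
/- Let T be a finite tree and let a and b be adjacent vertices. Then min(h_a(b), h_b(a)) = 1 + (the least n such that a or b is a leaf of G_n in the pruning sequence of T). Moreover: if h_a(b) < h_b(a) then b is a leaf of G_{h_a(b)−1} while a is not a leaf of G_m for any m ≤ h_a(b)−1 (so under the cutting-off-leaves strategy the player observing b, i.e., the player at a, is the first to answer, at time h_a(b)); if h_a(b) = h_b(a) then both a and b first become leaves at step h_a(b)−1 (so both players answer simultaneously at time h_a(b)); and symmetrically if h_b(a) < h_a(b). -/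
section Aux

variable {V : Type*} [Fintype V] {T : SimpleGraph V}

private lemma dist_adj {a b : V} (h : T.Adj a b) : T.dist a b = 1 :=
  SimpleGraph.dist_eq_one_iff_adj.mpr h

private lemma tree_dist_step (hT : T.IsTree) {a b c w : V} (hab : T.Adj a b) (hcb : T.Adj c b)
    (hac : a ≠ c) (hw : T.dist b w = 1 + T.dist c w) :
    T.dist a w = 1 + T.dist b w := by
  classical
  have hconn := hT.isConnected
  have htri : T.dist a w ≤ 1 + T.dist b w := by
    have := hconn.dist_triangle (u := a) (v := b) (w := w)
    rwa [dist_adj hab] at this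
  rcases Nat.lt_or_ge (T.dist b w) (T.dist a w) with hgt | hle
  · omega
  · exfalso
    obtain ⟨q, hq, hql⟩ := hconn.exists_path_of_dist c w
    have hbq : b ∉ q.support := by
      intro hmem
      have h1 : T.dist b w ≤ (q.dropUntil b hmem).length := SimpleGraph.dist_le _
      have h2 := SimpleGraph.Walk.length_dropUntil_le q hmem
      omega
    obtain ⟨p, hp, hpl⟩ := hconn.exists_path_of_dist a w
    have hbp : b ∉ p.support := by
      intro hmem
      have h1 : T.dist b w ≤ (p.dropUntil b hmem).length := SimpleGraph.dist_le _
      have h2 : T.dist a b ≤ (p.takeUntil b hmem).length := SimpleGraph.dist_le _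
      have h3 := congrArg SimpleGraph.Walk.length (p.take_spec hmem)
      rw [SimpleGraph.Walk.length_append] at h3
      rw [dist_adj hab] at h2
      omega
    have hu := hT.existsUnique_path b w
    have e : (SimpleGraph.Walk.cons hcb.symm q) = (SimpleGraph.Walk.cons hab.symm p) :=
      hu.unique (hq.cons hbq) (hp.cons hbp)
    have e2 := congrArg SimpleGraph.Walk.support e
    rw [SimpleGraph.Walk.support_cons, SimpleGraph.Walk.support_cons] at e2
    have e3 : q.support = p.support := by
      injection e2 with h1 h2
    have hc : q.support.head? = some c := by
      rw [SimpleGraph.Walk.support_eq_cons]; rfl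
    have ha : p.support.head? = some a := by
      rw [SimpleGraph.Walk.support_eq_cons]; rfl
    rw [e3, ha] at hc
    exact hac (Option.some_injective _ hc)

private lemma one_le_rootedHeight (a b : V) : 1 ≤ rootedHeight T a b :=
  Nat.le_add_right 1 _

/-- H2: if `a` and `c` are distinct neighbors of `b`, then `H a b ≥ 1 + H b c`. -/
private lemma rootedHeight_branch (hT : T.IsTree) {a b c : V} (hab : T.Adj a b)
    (hbc : T.Adj b c) (hac : a ≠ c) :
    rootedHeight T b c + 1 ≤ rootedHeight T a b := by
  classical
  unfold rootedHeight
  set s2 := Finset.univ.filter fun w => T.dist b w = T.dist b c + T.dist c w with hs2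
  have hne : s2.Nonempty := ⟨c, by simp [hs2, SimpleGraph.dist_self]⟩
  obtain ⟨w, hwmem, hwsup⟩ := Finset.exists_mem_eq_sup s2 hne (fun w => T.dist c w)
  try simp only at hwsup
  rw [Finset.mem_filter] at hwmem
  have hw : T.dist b w = 1 + T.dist c w := by
    rw [hwmem.2, dist_adj hbc]
  have hstep := tree_dist_step hT hab hbc.symm hac hw
  have hw1 : w ∈ Finset.univ.filter fun w => T.dist a w = T.dist a b + T.dist b w := by
    simp only [Finset.mem_filter, Finset.mem_univ, true_and]
    rw [dist_adj hab, hstep]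
  have hls := Finset.le_sup (f := fun w => T.dist b w) hw1
  try simp only at hls
  omega

/-- H3: if `H a b ≥ n + 2` then `b` has a neighbor `c ≠ a` with `H b c ≥ n + 1`. -/
private lemma rootedHeight_succ (hT : T.IsTree) {a b : V} {n : ℕ} (hab : T.Adj a b)
    (h : n + 2 ≤ rootedHeight T a b) :
    ∃ c, T.Adj b c ∧ c ≠ a ∧ n + 1 ≤ rootedHeight T b c := by
  classical
  have hconn := hT.isConnected
  unfold rootedHeight at h
  have hsup : n < (Finset.univ.filter fun w =>
      T.dist a w = T.dist a b + T.dist b w).sup (fun w => T.dist b w) := by omega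
  obtain ⟨w, hwmem, hwd⟩ := Finset.lt_sup_iff.mp hsup
  rw [Finset.mem_filter] at hwmem
  have hd0 : T.dist b w ≠ 0 := by omega
  obtain ⟨p, hpl⟩ := SimpleGraph.exists_walk_of_dist_ne_zero hd0
  cases p with
  | nil => simp at hpl; omega
  | @cons _ c _ hbc q =>
    rw [SimpleGraph.Walk.length_cons] at hpl
    have h1 : T.dist c w ≤ q.length := SimpleGraph.dist_le q
    have h2 : T.dist b w ≤ 1 + T.dist c w := by
      have := hconn.dist_triangle (u := b) (v := c) (w := w)
      rwa [dist_adj hbc] at this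
    have hcw : T.dist b w = 1 + T.dist c w := by omega
    refine ⟨c, hbc, ?_, ?_⟩
    · intro hca
      subst hca
      have := hwmem.2
      rw [dist_adj hab] at this
      omega
    · have hw2 : w ∈ Finset.univ.filter fun x => T.dist b x = T.dist b c + T.dist c x := by
        simp only [Finset.mem_filter, Finset.mem_univ, true_and]
        rw [dist_adj hbc]
        exact hcw
      have hls := Finset.le_sup (f := fun x => T.dist c x) hw2
      try simp only at hls
      unfold rootedHeight
      omega

/-- Adjacency in the pruning sequence, characterized by rooted heights. -/
private lemma adj_pruneSeq (hT : T.IsTree) :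
    ∀ n, ∀ u v : V, (pruneSeq T n).Adj u v ↔
      T.Adj u v ∧ n < rootedHeight T u v ∧ n < rootedHeight T v u := by
  intro n
  induction n with
  | zero =>
    intro u v
    have h0 : pruneSeq T 0 = T := rfl
    rw [h0]
    refine ⟨fun h => ⟨h, ?_, ?_⟩, fun h => h.1⟩
    · exact one_le_rootedHeight u v
    · exact one_le_rootedHeight v u
  | succ n ih =>
    intro u v
    have hstep : pruneSeq T (n + 1) = pruneLeaves (pruneSeq T n) :=
      Function.iterate_succ_apply' pruneLeaves n T
    rw [hstep]
    show ((pruneSeq T n).Adj u v ∧ ¬ IsLeafVert (pruneSeq T n) u ∧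
        ¬ IsLeafVert (pruneSeq T n) v) ↔ _
    have leaf_iff : ∀ x : V, IsLeafVert (pruneSeq T n) x ↔
        ∃! w, T.Adj x w ∧ n < rootedHeight T x w ∧ n < rootedHeight T w x := by
      intro x
      exact existsUnique_congr fun w => ih x w
    constructor
    · rintro ⟨hadj, hu, hv⟩
      rw [ih] at hadj
      obtain ⟨huv, h1, h2⟩ := hadj
      refine ⟨huv, ?_, ?_⟩
      · -- n + 1 < H u v : v is not a leaf, so v has a second pruned neighbor c ≠ u
        rw [leaf_iff] at hv
        have hPu : T.Adj v u ∧ n < rootedHeight T v u ∧ n < rootedHeight T u v :=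
          ⟨huv.symm, h2, h1⟩
        have : ∃ c, (T.Adj v c ∧ n < rootedHeight T v c ∧ n < rootedHeight T c v) ∧ c ≠ u := by
          by_contra hcon
          push_neg at hcon
          exact hv ⟨u, hPu, fun y hy => by
            by_contra hne
            exact hne (hcon y hy)⟩
        obtain ⟨c, hc, hcu⟩ := this
        have := rootedHeight_branch hT huv hc.1 (fun h => hcu h.symm)
        omega
      · rw [leaf_iff] at hu
        have hPv : T.Adj u v ∧ n < rootedHeight T u v ∧ n < rootedHeight T v u :=
          ⟨huv, h1, h2⟩
        have : ∃ c, (T.Adj u c ∧ n < rootedHeight T u c ∧ n < rootedHeight T c u) ∧ c ≠ v := by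
          by_contra hcon
          push_neg at hcon
          exact hu ⟨v, hPv, fun y hy => by
            by_contra hne
            exact hne (hcon y hy)⟩
        obtain ⟨c, hc, hcv⟩ := this
        have := rootedHeight_branch hT huv.symm hc.1 (fun h => hcv h.symm)
        omega
    · rintro ⟨huv, h1, h2⟩
      have hadj : (pruneSeq T n).Adj u v := (ih u v).mpr ⟨huv, by omega, by omega⟩
      refine ⟨hadj, ?_, ?_⟩
      · -- u not a leaf of G_n
        rw [leaf_iff]
        rintro ⟨w, hw, huniq⟩
        obtain ⟨c, hc, hcv, hHc⟩ := rootedHeight_succ hT huv.symm (by omega : n + 2 ≤ _)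
        have hPc : T.Adj u c ∧ n < rootedHeight T u c ∧ n < rootedHeight T c u := by
          refine ⟨hc, by omega, ?_⟩
          have := rootedHeight_branch hT hc.symm huv (fun h => hcv h)
          omega
        have hPv : T.Adj u v ∧ n < rootedHeight T u v ∧ n < rootedHeight T v u :=
          ⟨huv, by omega, by omega⟩
        have e1 := huniq c hPc
        have e2 := huniq v hPv
        exact hcv (e1.trans e2.symm)
      · rw [leaf_iff]
        rintro ⟨w, hw, huniq⟩
        obtain ⟨c, hc, hcu, hHc⟩ := rootedHeight_succ hT huv (by omega : n + 2 ≤ _)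
        have hPc : T.Adj v c ∧ n < rootedHeight T v c ∧ n < rootedHeight T c v := by
          refine ⟨hc, by omega, ?_⟩
          have := rootedHeight_branch hT hc.symm huv.symm (fun h => hcu h)
          omega
        have hPu : T.Adj v u ∧ n < rootedHeight T v u ∧ n < rootedHeight T u v :=
          ⟨huv.symm, by omega, by omega⟩
        have e1 := huniq c hPc
        have e2 := huniq u hPu
        exact hcu (e1.trans e2.symm)

private lemma leaf_pruneSeq (hT : T.IsTree) (n : ℕ) (x : V) :
    IsLeafVert (pruneSeq T n) x ↔
      ∃! w, T.Adj x w ∧ n < rootedHeight T x w ∧ n < rootedHeight T w x :=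
  existsUnique_congr fun w => adj_pruneSeq hT n x w

/-- F1: if `H a b ≤ H b a`, then `b` is a leaf of `G_{H a b - 1}`. -/
private lemma leaf_at (hT : T.IsTree) {a b : V} (hab : T.Adj a b)
    (hle : rootedHeight T a b ≤ rootedHeight T b a) :
    IsLeafVert (pruneSeq T (rootedHeight T a b - 1)) b := by
  rw [leaf_pruneSeq hT]
  have h1 := one_le_rootedHeight (T := T) a b
  have h2 := one_le_rootedHeight (T := T) b a
  refine ⟨a, ⟨hab.symm, by omega, by omega⟩, ?_⟩
  rintro y ⟨hy, hy1, hy2⟩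
  by_contra hne
  have := rootedHeight_branch hT hab hy (fun h => hne h.symm)
  omega

/-- F2: if `m < H a b` and `m + 1 < H b a`, then `a` is not a leaf of `G_m`. -/
private lemma not_leaf (hT : T.IsTree) {a b : V} {m : ℕ} (hab : T.Adj a b)
    (h1 : m < rootedHeight T a b) (h2 : m + 1 < rootedHeight T b a) :
    ¬ IsLeafVert (pruneSeq T m) a := by
  rw [leaf_pruneSeq hT]
  rintro ⟨w, hw, huniq⟩
  obtain ⟨c, hc, hcb, hHc⟩ := rootedHeight_succ hT hab.symm (by omega : m + 2 ≤ _)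
  have hPc : T.Adj a c ∧ m < rootedHeight T a c ∧ m < rootedHeight T c a := by
    refine ⟨hc, by omega, ?_⟩
    have := rootedHeight_branch hT hc.symm hab (fun h => hcb h)
    omega
  have hPb : T.Adj a b ∧ m < rootedHeight T a b ∧ m < rootedHeight T b a :=
    ⟨hab, by omega, by omega⟩
  have e1 := huniq c hPc
  have e2 := huniq b hPb
  exact hcb (e1.trans e2.symm)

end Aux

/-- For adjacent vertices `a`, `b` of a finite tree `T`:
`min (h_a(b), h_b(a)) = 1 + (least n such that a or b is a leaf of G_n)`.
Moreover, if `h_a(b) < h_b(a)` then `b` is a leaf of `G_{h_a(b)-1}` while `a` is not a leaf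
of any `G_m`, `m ≤ h_a(b)-1` (so under cutting off leaves the player at `a` answers first,
at time `h_a(b)`); if `h_a(b) = h_b(a)` then both `a` and `b` first become leaves at step
`h_a(b)-1` (both players answer simultaneously at time `h_a(b)`); and symmetrically if
`h_b(a) < h_a(b)`. -/
theorem who_answers_first_simultaneous {V : Type*} [Fintype V] (T : SimpleGraph V)
    (hT : T.IsTree) (a b : V) (hab : T.Adj a b) :
    (∀ n : ℕ, (IsLeafVert (pruneSeq T n) a ∨ IsLeafVert (pruneSeq T n) b) →
      (∀ m < n, ¬ (IsLeafVert (pruneSeq T m) a ∨ IsLeafVert (pruneSeq T m) b)) →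
      min (rootedHeight T a b) (rootedHeight T b a) = n + 1) ∧
    (rootedHeight T a b < rootedHeight T b a →
      IsLeafVert (pruneSeq T (rootedHeight T a b - 1)) b ∧
      ∀ m ≤ rootedHeight T a b - 1, ¬ IsLeafVert (pruneSeq T m) a) ∧
    (rootedHeight T a b = rootedHeight T b a →
      (IsLeafVert (pruneSeq T (rootedHeight T a b - 1)) a ∧
        ∀ m < rootedHeight T a b - 1, ¬ IsLeafVert (pruneSeq T m) a) ∧
      (IsLeafVert (pruneSeq T (rootedHeight T a b - 1)) b ∧
        ∀ m < rootedHeight T a b - 1, ¬ IsLeafVert (pruneSeq T m) b)) ∧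
    (rootedHeight T b a < rootedHeight T a b →
      IsLeafVert (pruneSeq T (rootedHeight T b a - 1)) a ∧
      ∀ m ≤ rootedHeight T b a - 1, ¬ IsLeafVert (pruneSeq T m) b) := by
  have h1 := one_le_rootedHeight (T := T) a b
  have h2 := one_le_rootedHeight (T := T) b a
  have notA : ∀ m : ℕ, m < rootedHeight T a b → m + 1 < rootedHeight T b a →
      ¬ IsLeafVert (pruneSeq T m) a := fun m hm hm' => not_leaf hT hab hm hm'
  have notB : ∀ m : ℕ, m < rootedHeight T b a → m + 1 < rootedHeight T a b →
      ¬ IsLeafVert (pruneSeq T m) b := fun m hm hm' => not_leaf hT hab.symm hm hm'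
  refine ⟨?_, ?_, ?_, ?_⟩
  · intro n hn hmin
    set k := min (rootedHeight T a b) (rootedHeight T b a) with hk
    have hleaf : IsLeafVert (pruneSeq T (k - 1)) a ∨ IsLeafVert (pruneSeq T (k - 1)) b := by
      rcases le_total (rootedHeight T a b) (rootedHeight T b a) with h | h
      · right
        have hk1 : k = rootedHeight T a b := min_eq_left h
        rw [hk1]
        exact leaf_at hT hab h
      · left
        have hk1 : k = rootedHeight T b a := min_eq_right h
        rw [hk1]
        exact leaf_at hT hab.symm h
    have hnone : ∀ m, m < k - 1 →
        ¬ (IsLeafVert (pruneSeq T m) a ∨ IsLeafVert (pruneSeq T m) b) := by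
      intro m hm
      rintro (ha | hb)
      · exact notA m (by omega) (by omega) ha
      · exact notB m (by omega) (by omega) hb
    rcases lt_trichotomy n (k - 1) with h | h | h
    · exact absurd hn (hnone n h)
    · omega
    · exact absurd hleaf (hmin (k - 1) h)
  · intro hlt
    refine ⟨leaf_at hT hab (le_of_lt hlt), ?_⟩
    intro m hm
    exact notA m (by omega) (by omega)
  · intro heq
    refine ⟨⟨?_, ?_⟩, leaf_at hT hab (le_of_eq heq), ?_⟩
    · rw [heq]
      exact leaf_at hT hab.symm (le_of_eq heq.symm)
    · intro m hm
      exact notA m (by omega) (by omega)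
    · intro m hm
      exact notB m (by omega) (by omega)
  · intro hlt
    refine ⟨leaf_at hT hab.symm (le_of_lt hlt), ?_⟩
    intro m hm
    exact notB m (by omega) (by omega)
end

section
/- Every admissible labeling of a finite tree corresponds to a strategy: let T be a finite tree with a proper 2-coloring into classes V_A and V_B, suppose every edge of T is assigned a nonempty set of directions (toward one endpoint or toward both) and a label ℓ(e) ∈ ℕ with ℓ(e) ≥ 1, such that whenever an edge {v, w} is directed toward w, every edge {u, v} with u a neighbor of v, u ≠ w, satisfies ℓ({u, v}) < ℓ({v, w}) (labels strictly increase along directed paths). Then there exists a correct strategy (σ_A, g_A, σ_B, g_B) on T whose induced labels and directions coincide with the given ones: for every edge {u, v} with u ∈ V_A and v ∈ V_B, min(σ_A(v), σ_B(u)) = ℓ({u, v}), σ_A(v) ≤ σ_B(u) holds iff the edge is directed toward u, and σ_B(u) ≤ σ_A(v) holds iff the edge is directed toward v. -/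
open Classical in
/-- Time at which the player at a neighbor of `v`, observing `v`, speaks: the label of
the unique edge at `v` directed away from `v`, if any; `⊤` otherwise. -/
noncomputable def ALsig {V : Type*} (T : SimpleGraph V) (dir : V → V → Prop)
    (ℓ : V → V → ℕ) (v : V) : ℕ∞ :=
  if h : ∃ w, T.Adj v w ∧ dir v w then (ℓ v h.choose : ℕ∞) else ⊤

open Classical in
/-- The guess made upon observing `v`: the endpoint of the unique edge at `v`
directed away from `v`, if any. -/
noncomputable def ALg {V : Type*} (T : SimpleGraph V) (dir : V → V → Prop) (v : V) : V :=
  if h : ∃ w, T.Adj v w ∧ dir v w then h.choose else v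

/-- Every admissible labeling of a finite tree corresponds to a strategy. Let `T` be a
finite tree properly 2-colored by `c` into `V_A` (`c = true`, where player A sits) and
`V_B` (`c = false`). Suppose every edge of `T` carries a nonempty set of directions
(`dir x y` meaning the edge `{x, y}` is directed toward `y`) and a label `ℓ ≥ 1`
(symmetric in the endpoints) such that labels strictly increase along directed paths:
whenever `{v, w}` is directed toward `w`, every other edge `{u, v}` at `v` has strictly
smaller label. Then there is a correct strategy on `T` whose induced labels and directions
coincide with the given ones. -/
theorem admissible_labeling_realizable {V : Type*} [Fintype V] (T : SimpleGraph V)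
    (hT : T.IsTree) (c : V → Bool) (hc : ∀ u v, T.Adj u v → c u ≠ c v)
    (dir : V → V → Prop) (ℓ : V → V → ℕ)
    (hdir : ∀ u v, T.Adj u v → dir u v ∨ dir v u)
    (hpos : ∀ u v, T.Adj u v → 1 ≤ ℓ u v)
    (hsymm : ∀ u v, T.Adj u v → ℓ u v = ℓ v u)
    (hmono : ∀ v w, T.Adj v w → dir v w → ∀ u, T.Adj u v → u ≠ w → ℓ u v < ℓ v w) :
    ∃ (σA σB : V → ℕ∞) (gA gB : V → V),
      (∀ v, 1 ≤ σA v) ∧ (∀ v, 1 ≤ σB v) ∧ CorrectStrategy T σA σB gA gB ∧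
      ∀ u v : V, T.Adj u v → c u = true → c v = false →
        min (σA v) (σB u) = (ℓ u v : ℕ∞) ∧
        (σA v ≤ σB u ↔ dir v u) ∧
        (σB u ≤ σA v ↔ dir u v) := by
  classical
  -- at each vertex, at most one incident edge is directed away from it
  have uniq : ∀ v w₁ w₂, T.Adj v w₁ → dir v w₁ → T.Adj v w₂ → dir v w₂ → w₁ = w₂ := by
    intro v w₁ w₂ h1 d1 h2 d2
    by_contra hne
    have A := hmono v w₁ h1 d1 w₂ h2.symm (fun h => hne h.symm)
    have B := hmono v w₂ h2 d2 w₁ h1.symm hne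
    have e1 := hsymm v w₁ h1
    have e2 := hsymm v w₂ h2
    omega
  set σ := ALsig T dir ℓ with hσdef
  set g := ALg T dir with hgdef
  have key : ∀ v u, T.Adj v u → dir v u → σ v = (ℓ v u : ℕ∞) ∧ g v = u := by
    intro v u hadj hd
    have h : ∃ w, T.Adj v w ∧ dir v w := ⟨u, hadj, hd⟩
    have hu : h.choose = u := uniq v _ u h.choose_spec.1 h.choose_spec.2 hadj hd
    constructor
    · show ALsig T dir ℓ v = _
      rw [ALsig, dif_pos h, hu]
    · show ALg T dir v = _
      rw [ALg, dif_pos h, hu]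
  have hlt : ∀ v u, T.Adj v u → ¬ dir v u → (ℓ v u : ℕ∞) < σ v := by
    intro v u hadj hnd
    show _ < ALsig T dir ℓ v
    rw [ALsig]
    split_ifs with h
    · have hw := h.choose_spec
      have hne : u ≠ h.choose := fun he => hnd (he ▸ hw.2)
      have hm := hmono v h.choose hw.1 hw.2 u hadj.symm hne
      have : ℓ v u < ℓ v h.choose := by rw [hsymm v u hadj]; exact hm
      exact_mod_cast this
    · exact Ne.lt_top (by simp)
  have hle : ∀ v u, T.Adj v u → (ℓ v u : ℕ∞) ≤ σ v := by
    intro v u hadj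
    by_cases hd : dir v u
    · exact (key v u hadj hd).1.ge
    · exact (hlt v u hadj hd).le
  have h1σ : ∀ v, 1 ≤ σ v := by
    intro v
    show (1 : ℕ∞) ≤ ALsig T dir ℓ v
    rw [ALsig]; split_ifs with h
    · exact_mod_cast hpos v h.choose h.choose_spec.1
    · exact le_top
  -- whoever speaks first is correct
  have speak : ∀ a b, T.Adj a b → σ b ≤ σ a → g b = a := by
    intro a b hadj hle'
    by_cases hd : dir b a
    · exact (key b a hadj.symm hd).2
    · exfalso
      have hda : dir a b := (hdir a b hadj).resolve_right hd
      have h1 := (key a b hadj hda).1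
      have h2 := hlt b a hadj.symm hd
      have hlt2 : σ a < σ b := by
        rw [h1, hsymm a b hadj]; exact h2
      exact absurd hle' (not_le.mpr hlt2)
  refine ⟨σ, σ, g, g, h1σ, h1σ, ?_, ?_⟩
  · intro a b hadj
    refine ⟨?_, speak a b hadj, speak b a hadj.symm⟩
    rcases hdir a b hadj with h | h
    · have h1 := (key a b hadj h).1
      calc min (σ b) (σ a) ≤ σ a := min_le_right _ _
        _ < ⊤ := by rw [h1]; exact Ne.lt_top (by simp)
    · have h1 := (key b a hadj.symm h).1
      calc min (σ b) (σ a) ≤ σ b := min_le_left _ _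
        _ < ⊤ := by rw [h1]; exact Ne.lt_top (by simp)
  · intro u v hadj _ _
    have hs := hsymm u v hadj
    refine ⟨?_, ?_, ?_⟩
    · by_cases hd : dir v u
      · have h1 : σ v = (ℓ u v : ℕ∞) := by
          rw [(key v u hadj.symm hd).1, hs]
        have h2 : (ℓ u v : ℕ∞) ≤ σ u := hle u v hadj
        rw [min_eq_left (h1.trans_le h2), h1]
      · have hdu : dir u v := (hdir u v hadj).resolve_right hd
        have h1 : σ u = (ℓ u v : ℕ∞) := (key u v hadj hdu).1
        have h2 : (ℓ u v : ℕ∞) < σ v := by rw [hs]; exact hlt v u hadj.symm hd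
        rw [min_eq_right (h1.trans_le h2.le), h1]
    · constructor
      · intro hle'
        by_contra hnd
        have hdu : dir u v := (hdir u v hadj).resolve_right hnd
        have h1 : σ u = (ℓ u v : ℕ∞) := (key u v hadj hdu).1
        have h2 : (ℓ u v : ℕ∞) < σ v := by rw [hs]; exact hlt v u hadj.symm hnd
        exact absurd hle' (not_le.mpr (h1.trans_lt h2))
      · intro hd
        have h1 : σ v = (ℓ u v : ℕ∞) := by rw [(key v u hadj.symm hd).1, hs]
        exact h1.trans_le (hle u v hadj)
    · constructor
      · intro hle'
        by_contra hnd
        have hdv : dir v u := (hdir u v hadj).resolve_left hnd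
        have h1 : σ v = (ℓ u v : ℕ∞) := by rw [(key v u hadj.symm hdv).1, hs]
        have h2 : (ℓ u v : ℕ∞) < σ u := hlt u v hadj hnd
        exact absurd hle' (not_le.mpr (by rw [h1]; exact h2))
      · intro hd
        have h1 : σ u = (ℓ u v : ℕ∞) := (key u v hadj hd).1
        have h2 : (ℓ u v : ℕ∞) ≤ σ v := by rw [hs]; exact hle v u hadj.symm
        exact h1.trans_le h2
end
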